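/- In the limit ζ → 1 (averaging every step, η → ∞), the asymptotic variance from Lemma 2 becomes Q_MB = (ασ²/M)(2c − αc² − αβ²/M)⁻¹, while in the limit ζ → 0 (one-shot, η → 0) it becomes Q_OSA = (ασ²/M)(2c − αc² − αβ²)⁻¹; and Q_MB ≤ Q_OSA with equality if and only if β = 0 or M = 1. -/

import Mathlib

/-!
With `η(ζ) = ζ / ((1 - ζ) k)` and `k = α(2c - αc²) > 0`, `η → ∞` as `ζ → 1⁻` and `η → 0` as
`ζ → 0`, while the weight `(1 + η/M)/(1 + η) = M⁻¹ + (1 - M⁻¹)/(1 + η)` tends to `M⁻¹` and to `1`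
respectively; `Q` is continuous in this weight wherever its denominator is nonzero. For the
comparison, `αβ²/M ≤ αβ²` because `M ≥ 1`, with equality exactly when `αβ² = 0` or `M = 1`.
-/

open Filter Topology Set

lemma tendsto_div_one_sub_mul_nhdsLT_one {k : ℝ} (hk : 0 < k) :
    Tendsto (fun ζ : ℝ => ζ / ((1 - ζ) * k)) (𝓝[<] 1) atTop := by
  have hden : Tendsto (fun ζ : ℝ => (1 - ζ) * k) (𝓝[<] 1) (𝓝[>] 0) := by
    refine tendsto_nhdsWithin_of_tendsto_nhds_of_eventually_within _ ?_ ?_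
    · have : Continuous (fun ζ : ℝ => (1 - ζ) * k) := by fun_prop
      simpa using (this.tendsto 1).mono_left nhdsWithin_le_nhds
    · filter_upwards [self_mem_nhdsWithin] with ζ (hζ : ζ < 1)
      exact mul_pos (sub_pos.2 hζ) hk
  have hnum : Tendsto (fun ζ : ℝ => ζ) (𝓝[<] 1) (𝓝 1) := nhdsWithin_le_nhds
  simpa only [div_eq_mul_inv, Function.comp_def] using
    hnum.pos_mul_atTop one_pos (tendsto_inv_nhdsGT_zero.comp hden)

lemma tendsto_div_one_sub_mul_nhds_zero {k : ℝ} (hk : k ≠ 0) :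
    Tendsto (fun ζ : ℝ => ζ / ((1 - ζ) * k)) (𝓝 0) (𝓝 0) := by
  have : ContinuousAt (fun ζ : ℝ => ζ / ((1 - ζ) * k)) 0 := by
    fun_prop (disch := simpa using hk)
  simpa using this.tendsto

lemma one_add_div_div_one_add (M : ℝ) {t : ℝ} (ht : 1 + t ≠ 0) :
    (1 + t / M) / (1 + t) = M⁻¹ + (1 - M⁻¹) * (1 + t)⁻¹ := by
  field_simp
  ring

lemma tendsto_one_add_div_div_one_add_atTop (M : ℝ) :
    Tendsto (fun t : ℝ => (1 + t / M) / (1 + t)) atTop (𝓝 M⁻¹) := by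
  have hinv : Tendsto (fun t : ℝ => (1 + t)⁻¹) atTop (𝓝 0) :=
    tendsto_inv_atTop_zero.comp (tendsto_atTop_add_const_left _ 1 tendsto_id)
  have := (hinv.const_mul (1 - M⁻¹)).const_add M⁻¹
  rw [mul_zero, add_zero] at this
  refine this.congr' ?_
  filter_upwards [eventually_gt_atTop 0] with t ht
  rw [one_add_div_div_one_add M (by positivity)]

lemma tendsto_one_add_div_div_one_add_nhds_zero (M : ℝ) :
    Tendsto (fun t : ℝ => (1 + t / M) / (1 + t)) (𝓝 0) (𝓝 1) := by
  have : ContinuousAt (fun t : ℝ => (1 + t / M) / (1 + t)) 0 := by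
    fun_prop (disch := norm_num)
  simpa using this.tendsto

lemma continuousAt_const_mul_inv_sub_mul {C D b r : ℝ} (h : D - b * r ≠ 0) :
    ContinuousAt (fun x : ℝ => C * (D - b * x)⁻¹) r := by
  fun_prop (disch := exact h)

lemma mul_inv_sub_div_le_mul_inv_sub {C D b M : ℝ} (hC : 0 ≤ C) (hb : 0 ≤ b) (hM : 1 ≤ M)
    (hD : 0 < D - b) : C * (D - b / M)⁻¹ ≤ C * (D - b)⁻¹ :=
  mul_le_mul_of_nonneg_left (inv_anti₀ hD (by linarith [div_le_self hb hM])) hC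

lemma mul_inv_sub_div_eq_mul_inv_sub_iff {C D b M : ℝ} (hC : C ≠ 0) :
    C * (D - b / M)⁻¹ = C * (D - b)⁻¹ ↔ b = 0 ∨ M = 1 := by
  rw [mul_right_inj' hC, inv_inj, sub_right_inj, div_eq_mul_inv, mul_right_eq_self₀, inv_eq_one,
    or_comm]

theorem stmt_11_general
    (α c β σ M : ℝ) (hα : 0 < α) (hσ : 0 < σ)
    (hM : 1 ≤ M) (hpos : 0 < 2 * c - α * c ^ 2 - α * β ^ 2)
    (η : ℝ → ℝ)
    (hη : ∀ ζ, η ζ = ζ / ((1 - ζ) * (α * (2 * c - α * c ^ 2))))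
    (Q : ℝ → ℝ)
    (hQ : ∀ ζ, Q ζ = (α * σ ^ 2 / M)
      * (2 * c - α * c ^ 2 - α * β ^ 2 * ((1 + η ζ / M) / (1 + η ζ)))⁻¹) :
    Tendsto Q (nhdsWithin 1 (Set.Ioo (0 : ℝ) 1))
        (nhds ((α * σ ^ 2 / M) * (2 * c - α * c ^ 2 - α * β ^ 2 / M)⁻¹))
    ∧ Tendsto Q (nhdsWithin 0 (Set.Ioo (0 : ℝ) 1))
        (nhds ((α * σ ^ 2 / M) * (2 * c - α * c ^ 2 - α * β ^ 2)⁻¹))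
    ∧ (α * σ ^ 2 / M) * (2 * c - α * c ^ 2 - α * β ^ 2 / M)⁻¹
        ≤ (α * σ ^ 2 / M) * (2 * c - α * c ^ 2 - α * β ^ 2)⁻¹
    ∧ ((α * σ ^ 2 / M) * (2 * c - α * c ^ 2 - α * β ^ 2 / M)⁻¹
          = (α * σ ^ 2 / M) * (2 * c - α * c ^ 2 - α * β ^ 2)⁻¹
        ↔ β = 0 ∨ M = 1) := by
  have hb : 0 ≤ α * β ^ 2 := by positivity
  have hC : 0 < α * σ ^ 2 / M := by positivity
  have hk : 0 < α * (2 * c - α * c ^ 2) := mul_pos hα (by linarith)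
  have hMB : 0 < 2 * c - α * c ^ 2 - α * β ^ 2 / M := by linarith [div_le_self hb hM]
  have hη1 : Tendsto η (𝓝[Ioo 0 1] 1) atTop := by
    rw [funext hη]
    exact (tendsto_div_one_sub_mul_nhdsLT_one hk).mono_left (nhdsWithin_mono _ Ioo_subset_Iio_self)
  have hη0 : Tendsto η (𝓝[Ioo 0 1] 0) (𝓝 0) := by
    rw [funext hη]
    exact (tendsto_div_one_sub_mul_nhds_zero hk.ne').mono_left nhdsWithin_le_nhds
  rw [funext hQ]
  refine ⟨?_, ?_, mul_inv_sub_div_le_mul_inv_sub hC.le hb hM hpos, ?_⟩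
  · have hcont := continuousAt_const_mul_inv_sub_mul (C := α * σ ^ 2 / M) (r := M⁻¹)
      (by simpa [div_eq_mul_inv] using hMB.ne')
    simpa [div_eq_mul_inv, Function.comp_def] using
      hcont.tendsto.comp ((tendsto_one_add_div_div_one_add_atTop M).comp hη1)
  · have hcont := continuousAt_const_mul_inv_sub_mul (C := α * σ ^ 2 / M) (r := 1)
      (by simpa using hpos.ne')
    simpa [Function.comp_def] using
      hcont.tendsto.comp ((tendsto_one_add_div_div_one_add_nhds_zero M).comp hη0)
  · rw [mul_inv_sub_div_eq_mul_inv_sub_iff hC.ne']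
    simp [hα.ne']

/-- Limits of the asymptotic variance `Q(ζ)` from Lemma 2: as `ζ → 1`
(mini-batch) it tends to `(ασ²/M)(2c - αc² - αβ²/M)⁻¹`; as `ζ → 0`
(one-shot) it tends to `(ασ²/M)(2c - αc² - αβ²)⁻¹`; and
`Q_MB ≤ Q_OSA`, with equality iff `β = 0` or `M = 1`. -/
theorem stmt_11
    (α c β σ M : ℝ) (hα : 0 < α) (hc : 0 < c) (hσ : 0 < σ) (hβ : 0 ≤ β)
    (hM : 1 ≤ M) (hpos : 0 < 2 * c - α * c ^ 2 - α * β ^ 2)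
    (η : ℝ → ℝ)
    (hη : ∀ ζ, η ζ = ζ / ((1 - ζ) * (α * (2 * c - α * c ^ 2))))
    (Q : ℝ → ℝ)
    (hQ : ∀ ζ, Q ζ = (α * σ ^ 2 / M)
      * (2 * c - α * c ^ 2 - α * β ^ 2 * ((1 + η ζ / M) / (1 + η ζ)))⁻¹) :
    Tendsto Q (nhdsWithin 1 (Set.Ioo (0 : ℝ) 1))
        (nhds ((α * σ ^ 2 / M) * (2 * c - α * c ^ 2 - α * β ^ 2 / M)⁻¹))
    ∧ Tendsto Q (nhdsWithin 0 (Set.Ioo (0 : ℝ) 1))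
        (nhds ((α * σ ^ 2 / M) * (2 * c - α * c ^ 2 - α * β ^ 2)⁻¹))
    ∧ (α * σ ^ 2 / M) * (2 * c - α * c ^ 2 - α * β ^ 2 / M)⁻¹
        ≤ (α * σ ^ 2 / M) * (2 * c - α * c ^ 2 - α * β ^ 2)⁻¹
    ∧ ((α * σ ^ 2 / M) * (2 * c - α * c ^ 2 - α * β ^ 2 / M)⁻¹
          = (α * σ ^ 2 / M) * (2 * c - α * c ^ 2 - α * β ^ 2)⁻¹
        ↔ β = 0 ∨ M = 1) :=
  stmt_11_general α c β σ M hα hσ hM hpos η hη Q hQ
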